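/- The closed real intervals Set.Icc (ε·c − r) (ε·c + r), where ε ∈ {1, −1} and (c, r) ranges over the family consisting of (α(n,k), ρ(n)) for n ≥ 1, 0 ≤ k ≤ 2^(n−1)−1, together with (p(n,k)+17·σ(n,m), σ(n,m)), (p(n,k)+13·σ(n,m), σ(n,m)), (q̃(n,k)−13·σ(n,m), σ(n,m)) and (q̃(n,k)−17·σ(n,m), σ(n,m)) for n, m ≥ 1 and 0 ≤ k ≤ 2^(n−1)−1, are pairwise disjoint: any two such intervals with distinct parameters have empty intersection. -/

import Mathlib

open UpperHalfPlane MatrixGroups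

noncomputable section

/-- `s k = Σᵢ 2·tᵢ·3ⁱ` where `k = Σᵢ tᵢ·2ⁱ` is the binary expansion of `k`;
equivalently `s 0 = 0`, `s (2j) = 3·(s j)`, `s (2j+1) = 3·(s j) + 2`. -/
def s : ℕ → ℕ
  | 0 => 0
  | k + 1 =>
    if (k + 1) % 2 = 0 then 3 * s ((k + 1) / 2)
    else 3 * s ((k + 1) / 2) + 2
decreasing_by all_goals (simp_wf; omega)

/-- Left endpoint of the middle third removed at stage `n` from the `k`-th interval of
stage `n−1` of the middle-thirds construction on `[1,2]`. -/
def pB (n k : ℕ) : ℝ := 1 + (3 * s k + 1) / 3 ^ n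

/-- Right endpoint of the middle third removed at stage `n` from the `k`-th interval of
stage `n−1` of the middle-thirds construction on `[1,2]`. -/
def qB (n k : ℕ) : ℝ := 1 + (3 * s k + 2) / 3 ^ n

/-- `α(n,k)`, the midpoint of the removed middle third. -/
def alphaB (n k : ℕ) : ℝ := (pB n k + qB n k) / 2

/-- `q̃(n,k) := q(n,k) − 1/(6·3^n)`. -/
def qtB (n k : ℕ) : ℝ := qB n k - 1 / (6 * 3 ^ n)

/-- `ρ(n) := 1/(12·3^n)`. -/
def rhoB (n : ℕ) : ℝ := 1 / (12 * 3 ^ n)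

/-- `σ(n,m) := 1/(60·3^n·2^m)`. -/
def sigB (n m : ℕ) : ℝ := 1 / (60 * 3 ^ n * 2 ^ m)

lemma rhoB_ne (n : ℕ) : rhoB n ≠ 0 := by unfold rhoB; positivity

lemma sigB_ne (n m : ℕ) : sigB n m ≠ 0 := by unfold sigB; positivity

/-- Index type for the family of half-circle data of the Blooming Cantor tree construction:
either a pair `(n,k)` (the central circles) or a tuple `(n,m,k,i)` with `i ∈ Fin 4`
selecting one of the four sequences of small circles. -/
def BIdx := (ℕ × ℕ) ⊕ (ℕ × ℕ × ℕ × Fin 4)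

/-- The center associated to an index. -/
def ctr : BIdx → ℝ
  | .inl (n, k) => alphaB n k
  | .inr (n, m, k, i) =>
    if i = 0 then pB n k + 17 * sigB n m
    else if i = 1 then pB n k + 13 * sigB n m
    else if i = 2 then qtB n k - 13 * sigB n m
    else qtB n k - 17 * sigB n m

/-- The radius associated to an index. -/
def rad : BIdx → ℝ
  | .inl (n, _) => rhoB n
  | .inr (n, m, _, _) => sigB n m

/-- The validity condition on the parameters of an index. -/
def validIdx : BIdx → Prop
  | .inl (n, k) => 1 ≤ n ∧ k < 2 ^ (n - 1)
  | .inr (n, m, k, _) => 1 ≤ n ∧ 1 ≤ m ∧ k < 2 ^ (n - 1)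

/-! Every interval of index `(n, k)` (or `(n, m, k, i)`) lies inside the open middle third
`(p(n,k), q(n,k))`, and distinct middle thirds are disjoint: after scaling by `3 ^ n'` with
`n' = n + d`, the stage-`n` third becomes `[(3 s k + 1) 3^d, (3 s k + 2) 3^d]`, and meeting the
stage-`n'` third would force the ternary digit `1` into `s k'`, whose digits are all `0` or `2`.

Within one middle third, measured from `p` in units of `3 ^ (-n)`, the central interval is
`[5/12, 7/12]`, while the small ones lie within `18 σ ≤ 3/20` of `p` or of `q̃ = p + 5/6` and halve
in size with each step in `m`. All intervals lie to the right of `1`, so those reflected by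
`ε = -1` meet none of the others. -/

theorem s_eq (k : ℕ) : s k = 3 * s (k / 2) + 2 * (k % 2) := by
  match k with
  | 0 => simp [s]
  | k + 1 => rw [s]; split <;> omega

theorem s_lt_s_succ (k : ℕ) : s k < s (k + 1) := by
  induction k using Nat.strong_induction_on with
  | _ k ih =>
    rw [s_eq k, s_eq (k + 1)]
    rcases Nat.even_or_odd' k with ⟨j, rfl | rfl⟩
    · rw [show (2 * j + 1) / 2 = j by omega, show 2 * j / 2 = j by omega]
      omega
    · have := ih j (by omega)
      rw [show (2 * j + 1 + 1) / 2 = j + 1 by omega, show (2 * j + 1) / 2 = j by omega]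
      omega

theorem s_strictMono : StrictMono s := strictMono_nat_of_lt_succ s_lt_s_succ

theorem s_div_pow_mod_three_ne_one (e k : ℕ) : s k / 3 ^ e % 3 ≠ 1 := by
  induction e generalizing k with
  | zero => rw [pow_zero, Nat.div_one, s_eq]; omega
  | succ e ih =>
    have h : s k / 3 = s (k / 2) := by rw [s_eq k]; omega
    rw [pow_succ', ← Nat.div_div_eq_div_mul, h]
    exact ih _

theorem s_scaled_gap (k k' d : ℕ) (h : d ≠ 0 ∨ k ≠ k') :
    (3 * s k + 2) * 3 ^ d ≤ 3 * s k' + 1 ∨ 3 * s k' + 2 ≤ (3 * s k + 1) * 3 ^ d := by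
  rcases d with _ | e
  · have : s k ≠ s k' := s_strictMono.injective.ne (by simpa using h)
    omega
  by_contra! hk
  obtain ⟨hlt, hgt⟩ := hk
  -- then `s k' / 3 ^ e = 3 s k + 1` would have last base-3 digit `1`
  have hdiv : s k' / 3 ^ e = 3 * s k + 1 := by
    rw [pow_succ] at hlt hgt
    generalize 3 ^ e = P at hlt hgt ⊢
    apply Nat.div_eq_of_lt_le <;> nlinarith
  exact s_div_pow_mod_three_ne_one e k' (by omega)

theorem disjoint_Ioo_pB_qB {n k n' k' : ℕ} (h : (n, k) ≠ (n', k')) :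
    Disjoint (Set.Ioo (pB n k) (qB n k)) (Set.Ioo (pB n' k') (qB n' k')) := by
  wlog hle : n ≤ n' generalizing n k n' k'
  · exact (this h.symm (by omega)).symm
  obtain ⟨d, rfl⟩ := Nat.exists_eq_add_of_le hle
  have hd : d ≠ 0 ∨ k ≠ k' := by
    by_contra! hd
    exact h (by rw [hd.1, hd.2, add_zero])
  have rescale (a : ℕ) : (a : ℝ) / 3 ^ n = ((a * 3 ^ d : ℕ) : ℝ) / 3 ^ (n + d) := by
    push_cast
    rw [pow_add]
    field_simp
  have cast_div_le {a b : ℕ} (hab : a ≤ b) : (a : ℝ) / 3 ^ (n + d) ≤ b / 3 ^ (n + d) := by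
    gcongr
  rw [Set.Ioo_disjoint_Ioo]
  unfold pB qB
  rcases s_scaled_gap k k' d hd with hgap | hgap
  · have := cast_div_le hgap
    rw [← rescale] at this
    push_cast at this
    exact min_le_of_left_le (le_max_of_le_right (by linarith))
  · have := cast_div_le hgap
    rw [← rescale] at this
    push_cast at this
    exact min_le_of_right_le (le_max_of_le_left (by linarith))

theorem qB_eq (n k : ℕ) : qB n k = pB n k + (3 ^ n : ℝ)⁻¹ := by
  unfold qB pB
  ring

theorem qtB_eq (n k : ℕ) : qtB n k = pB n k + 5 / 6 * (3 ^ n : ℝ)⁻¹ := by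
  unfold qtB
  rw [qB_eq]
  ring

theorem alphaB_eq (n k : ℕ) : alphaB n k = pB n k + 1 / 2 * (3 ^ n : ℝ)⁻¹ := by
  unfold alphaB
  rw [qB_eq]
  ring

theorem rhoB_eq (n : ℕ) : rhoB n = 1 / 12 * (3 ^ n : ℝ)⁻¹ := by
  unfold rhoB
  ring

theorem sigB_pos (n m : ℕ) : 0 < sigB n m := by unfold sigB; positivity

theorem sigB_le (n : ℕ) {m : ℕ} (hm : 1 ≤ m) : 120 * sigB n m ≤ (3 ^ n : ℝ)⁻¹ := by
  have h2 : (2 : ℝ) ≤ 2 ^ m := by simpa using pow_le_pow_right₀ one_le_two hm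
  unfold sigB
  rw [mul_one_div, div_le_iff₀ (by positivity)]
  field_simp
  nlinarith [pow_pos (three_pos : (0 : ℝ) < 3) n]

theorem two_mul_sigB_le (n : ℕ) {m m' : ℕ} (h : m < m') : 2 * sigB n m' ≤ sigB n m := by
  have h2 : (2 : ℝ) * 2 ^ m ≤ 2 ^ m' := by
    rw [← pow_succ']
    exact pow_le_pow_right₀ one_le_two h
  unfold sigB
  rw [mul_one_div, div_le_div_iff₀ (by positivity) (by positivity)]
  nlinarith [pow_pos (three_pos : (0 : ℝ) < 3) n]

theorem one_lt_pB (n k : ℕ) : 1 < pB n k := by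
  unfold pB
  have : (0 : ℝ) < (3 * s k + 1) / 3 ^ n := by positivity
  linarith

theorem disjoint_Icc_of_lt_or_lt {α : Type*} [Preorder α] {a b c d : α} (h : b < c ∨ d < a) :
    Disjoint (Set.Icc a b) (Set.Icc c d) := by
  rcases h with h | h
  · exact Set.disjoint_left.2 fun x hx hy => (hx.2.trans_lt h).not_ge hy.1
  · exact Set.disjoint_left.2 fun x hx hy => (hy.2.trans_lt h).not_ge hx.1

namespace BIdx

def level : BIdx → ℕ × ℕ
  | .inl (n, k) => (n, k)
  | .inr (n, _, k, _) => (n, k)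

def icc (i : BIdx) : Set ℝ := Set.Icc (ctr i - rad i) (ctr i + rad i)

theorem icc_subset_Ioo_level {i : BIdx} (hi : validIdx i) :
    i.icc ⊆ Set.Ioo (pB i.level.1 i.level.2) (qB i.level.1 i.level.2) := by
  rcases i with ⟨n, k⟩ | ⟨n, m, k, i⟩
  · have : 0 < (3 ^ n : ℝ)⁻¹ := by positivity
    refine Set.Icc_subset_Ioo ?_ ?_ <;>
      simp only [level, ctr, rad, alphaB_eq, rhoB_eq, qB_eq] <;> linarith
  · have := sigB_pos n m
    have := sigB_le n hi.2.1
    have := qtB_eq n k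
    have := qB_eq n k
    refine Set.Icc_subset_Ioo ?_ ?_ <;> fin_cases i <;>
      simp only [level, ctr, rad, Fin.zero_eta, Fin.mk_one, Fin.reduceFinMk, Fin.isValue,
        Fin.reduceEq, one_ne_zero, ↓reduceIte] <;>
      linarith

theorem icc_subset_Ioi_zero {i : BIdx} (hi : validIdx i) : i.icc ⊆ Set.Ioi 0 := fun _ hx =>
  (zero_lt_one.trans (one_lt_pB _ _)).trans (icc_subset_Ioo_level hi hx).1

open Pointwise in
theorem Icc_sign_mul_ctr (b : Bool) (i : BIdx) :
    Set.Icc ((if b then (1 : ℝ) else -1) * ctr i - rad i)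
      ((if b then (1 : ℝ) else -1) * ctr i + rad i) = if b then i.icc else -i.icc := by
  cases b
  · simp only [Bool.false_eq_true, if_false, neg_one_mul, icc, Set.neg_Icc]
    congr 1 <;> ring
  · simp only [if_true, one_mul, icc]

open Pointwise in
theorem disjoint_neg_icc_icc {i j : BIdx} (hi : validIdx i) (hj : validIdx j) :
    Disjoint (-i.icc) j.icc :=
  Set.disjoint_left.2 fun _ hx hx' => by
    have := icc_subset_Ioi_zero hi hx
    have := icc_subset_Ioi_zero hj hx'
    simp only [Set.mem_Ioi] at *
    linarith

theorem disjoint_icc_inl_inr {n m k : ℕ} (hm : 1 ≤ m) (i : Fin 4) :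
    Disjoint (icc (.inl (n, k))) (icc (.inr (n, m, k, i))) := by
  have := sigB_pos n m
  have := sigB_le n hm
  have := qtB_eq n k
  have := alphaB_eq n k
  have := rhoB_eq n
  apply disjoint_Icc_of_lt_or_lt
  fin_cases i <;>
    simp only [ctr, rad, Fin.zero_eta, Fin.mk_one, Fin.reduceFinMk, Fin.isValue,
        Fin.reduceEq, one_ne_zero, ↓reduceIte] <;>
    first | (left; linarith) | (right; linarith)

theorem disjoint_icc_inr_inr_of_lt {n m m' k : ℕ} (hm : 1 ≤ m) (hmm : m < m') (i i' : Fin 4) :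
    Disjoint (icc (.inr (n, m, k, i))) (icc (.inr (n, m', k, i'))) := by
  have := sigB_pos n m'
  have := sigB_le n hm
  have := two_mul_sigB_le n hmm
  have := qtB_eq n k
  apply disjoint_Icc_of_lt_or_lt
  fin_cases i <;> fin_cases i' <;>
    simp only [ctr, rad, Fin.zero_eta, Fin.mk_one, Fin.reduceFinMk, Fin.isValue,
        Fin.reduceEq, one_ne_zero, ↓reduceIte] <;>
    first | (left; linarith) | (right; linarith)

theorem disjoint_icc_inr_inr_of_ne {n m k : ℕ} (hm : 1 ≤ m) {i i' : Fin 4} (hii : i ≠ i') :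
    Disjoint (icc (.inr (n, m, k, i))) (icc (.inr (n, m, k, i'))) := by
  have := sigB_pos n m
  have := sigB_le n hm
  have := qtB_eq n k
  apply disjoint_Icc_of_lt_or_lt
  fin_cases i <;> fin_cases i' <;> first
    | exact absurd rfl hii
    | simp only [ctr, rad, Fin.zero_eta, Fin.mk_one, Fin.reduceFinMk, Fin.isValue, Fin.reduceEq,
        one_ne_zero, ↓reduceIte]
      first | (left; linarith) | (right; linarith)

theorem disjoint_icc_of_level_eq {i j : BIdx} (hi : validIdx i) (hj : validIdx j) (hij : i ≠ j)
    (hl : i.level = j.level) : Disjoint i.icc j.icc := by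
  rcases i with ⟨n, k⟩ | ⟨n, m, k, a⟩ <;> rcases j with ⟨n', k'⟩ | ⟨n', m', k', a'⟩ <;>
    obtain ⟨rfl, rfl⟩ := Prod.mk.inj hl
  · exact absurd rfl hij
  · exact disjoint_icc_inl_inr hj.2.1 a'
  · exact (disjoint_icc_inl_inr hi.2.1 a).symm
  · rcases lt_trichotomy m m' with h | rfl | h
    · exact disjoint_icc_inr_inr_of_lt hi.2.1 h a a'
    · exact disjoint_icc_inr_inr_of_ne hi.2.1 fun h => hij (h ▸ rfl)
    · exact (disjoint_icc_inr_inr_of_lt hj.2.1 h a' a).symm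

theorem disjoint_icc {i j : BIdx} (hi : validIdx i) (hj : validIdx j) (hij : i ≠ j) :
    Disjoint i.icc j.icc := by
  by_cases hl : i.level = j.level
  · exact disjoint_icc_of_level_eq hi hj hij hl
  · exact (disjoint_Ioo_pB_qB hl).mono (icc_subset_Ioo_level hi) (icc_subset_Ioo_level hj)

end BIdx

/-- The closed intervals `[ε·c − r, ε·c + r]`, for `ε ∈ {1,−1}` and `(c,r)` ranging over the
family of half-circle data of the Blooming Cantor tree construction, are pairwise disjoint. -/
theorem stmt_15 :
    ∀ (b₁ b₂ : Bool) (i₁ i₂ : BIdx), validIdx i₁ → validIdx i₂ → (b₁, i₁) ≠ (b₂, i₂) →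
      Disjoint
        (Set.Icc ((if b₁ then (1 : ℝ) else -1) * ctr i₁ - rad i₁)
          ((if b₁ then (1 : ℝ) else -1) * ctr i₁ + rad i₁))
        (Set.Icc ((if b₂ then (1 : ℝ) else -1) * ctr i₂ - rad i₂)
          ((if b₂ then (1 : ℝ) else -1) * ctr i₂ + rad i₂)) := by
  intro b₁ b₂ i₁ i₂ h₁ h₂ hne
  rw [BIdx.Icc_sign_mul_ctr, BIdx.Icc_sign_mul_ctr]
  cases b₁ <;> cases b₂ <;> simp only [Bool.false_eq_true, if_false, if_true]
  · exact (BIdx.disjoint_icc h₁ h₂ (by simpa using hne)).preimage Neg.neg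
  · exact BIdx.disjoint_neg_icc_icc h₁ h₂
  · exact (BIdx.disjoint_neg_icc_icc h₂ h₁).symm
  · exact BIdx.disjoint_icc h₁ h₂ (by simpa using hne)
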